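/- arXiv:2504.02761 — 2 statements merged into one kernel-verified Lean document; each statement's English description precedes it below -/
import Mathlib

section
/- Let (α_n), (θ_n), (η_n), (χ_n) be sequences in [0,+∞) such that ∑_n η_n < +∞, ∑_n χ_n < +∞, and for every n, α_{n+1} + θ_n ≤ (1+χ_n) α_n + η_n. Then ∑_n θ_n < +∞ and (α_n) converges to a nonnegative real number. -/
open Filter

/-- Robbins–Siegmund type lemma (deterministic case): if `α (n+1) + θ n ≤ (1+χ n) α n + η n`
with nonnegative sequences, summable `η` and `χ`, then `θ` is summable and `α` converges
to a nonnegative real number. -/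
theorem stmt0 (α θ η χ : ℕ → ℝ)
    (hα : ∀ n, 0 ≤ α n) (hθ : ∀ n, 0 ≤ θ n) (hη : ∀ n, 0 ≤ η n) (hχ : ∀ n, 0 ≤ χ n)
    (hηs : Summable η) (hχs : Summable χ)
    (hrec : ∀ n, α (n + 1) + θ n ≤ (1 + χ n) * α n + η n) :
    Summable θ ∧ ∃ l : ℝ, 0 ≤ l ∧ Tendsto α atTop (nhds l) := by
  set P : ℕ → ℝ := fun n => ∏ k ∈ Finset.range n, (1 + χ k) with hPdef
  have hP1 : ∀ n, 1 ≤ P n := by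
    intro n
    show 1 ≤ ∏ k ∈ Finset.range n, (1 + χ k)
    calc (1:ℝ) = ∏ _k ∈ Finset.range n, (1:ℝ) := by simp
      _ ≤ ∏ k ∈ Finset.range n, (1 + χ k) :=
        Finset.prod_le_prod (fun k _ => zero_le_one) (fun k _ => by linarith [hχ k])
  have hP0 : ∀ n, 0 < P n := fun n => lt_of_lt_of_le one_pos (hP1 n)
  have hPsucc : ∀ n, P (n + 1) = P n * (1 + χ n) := fun n => Finset.prod_range_succ _ _
  have hPmono : Monotone P := monotone_nat_of_le_succ (fun n => by
    rw [hPsucc n]; nlinarith [hχ n, hP0 n])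
  have hPbdd : ∀ n, P n ≤ Real.exp (∑' k, χ k) := by
    intro n
    calc P n ≤ ∏ k ∈ Finset.range n, Real.exp (χ k) :=
          Finset.prod_le_prod (fun k _ => by linarith [hχ k])
            (fun k _ => by linarith [Real.add_one_le_exp (χ k)])
      _ = Real.exp (∑ k ∈ Finset.range n, χ k) := (Real.exp_sum _ _).symm
      _ ≤ Real.exp (∑' k, χ k) :=
          Real.exp_le_exp.2 (Summable.sum_le_tsum _ (fun k _ => hχ k) hχs)
  have hPbddAbove : BddAbove (Set.range P) := ⟨Real.exp (∑' k, χ k), by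
    rintro _ ⟨n, rfl⟩; exact hPbdd n⟩
  have hPconv : Tendsto P atTop (nhds (⨆ n, P n)) :=
    tendsto_atTop_ciSup hPmono hPbddAbove
  set L := ⨆ n, P n with hL
  set β : ℕ → ℝ := fun n => α n / P n with hβdef
  have hβ0 : ∀ n, 0 ≤ β n := fun n => div_nonneg (hα n) (hP0 n).le
  have hβstep : ∀ n, β (n + 1) ≤ β n + η n := by
    intro n
    have h1 : α (n + 1) ≤ (1 + χ n) * α n + η n := by linarith [hθ n, hrec n]
    have h2 : α n / P n * P n = α n := div_mul_cancel₀ _ (hP0 n).ne'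
    rw [hβdef, div_le_iff₀ (hP0 (n + 1)), hPsucc n]
    have h3 : η n ≤ η n * (P n * (1 + χ n)) :=
      le_mul_of_one_le_right (hη n) (by nlinarith [hP1 n, hχ n])
    have expand : (α n / P n + η n) * (P n * (1 + χ n)) =
        (α n / P n * P n) * (1 + χ n) + η n * (P n * (1 + χ n)) := by ring
    rw [expand, h2]
    nlinarith [h3, h1]
  set S : ℕ → ℝ := fun n => ∑ k ∈ Finset.range n, η k with hSdef
  have hSle : ∀ n, S n ≤ ∑' k, η k := fun n => Summable.sum_le_tsum _ (fun k _ => hη k) hηs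
  set γ : ℕ → ℝ := fun n => β n - S n with hγdef
  have hγanti : Antitone γ := antitone_nat_of_succ_le (fun n => by
    have := hβstep n
    have hs : S (n + 1) = S n + η n := Finset.sum_range_succ _ _
    simp only [hγdef]
    rw [hs]; linarith)
  have hγbdd : BddBelow (Set.range γ) := ⟨-(∑' k, η k), by
    rintro _ ⟨n, rfl⟩
    have := hβ0 n
    have := hSle n
    simp only [hγdef]
    linarith⟩
  have hγconv : Tendsto γ atTop (nhds (⨅ n, γ n)) :=
    tendsto_atTop_ciInf hγanti hγbdd
  have hSconv : Tendsto S atTop (nhds (∑' k, η k)) := hηs.hasSum.tendsto_sum_nat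
  have hβconv : Tendsto β atTop (nhds ((⨅ n, γ n) + ∑' k, η k)) := by
    have : β = fun n => γ n + S n := by
      funext n; simp [hγdef]
    rw [this]
    exact hγconv.add hSconv
  have hαeq : α = fun n => β n * P n := by
    funext n; simp only [hβdef]
    rw [div_mul_cancel₀ _ (hP0 n).ne']
  have hαconv : Tendsto α atTop (nhds (((⨅ n, γ n) + ∑' k, η k) * L)) := by
    rw [hαeq]; exact hβconv.mul hPconv
  have hl0 : 0 ≤ ((⨅ n, γ n) + ∑' k, η k) * L :=
    le_of_tendsto_of_tendsto' tendsto_const_nhds hαconv (fun n => hα n)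
  -- bound on α
  obtain ⟨M, hM⟩ := hαconv.bddAbove_range
  have hM' : ∀ n, α n ≤ M := fun n => hM ⟨n, rfl⟩
  have hM0 : 0 ≤ M := le_trans (hα 0) (hM' 0)
  have hθsum : Summable θ := by
    apply summable_of_sum_range_le hθ
    intro n
    have key : ∀ k ∈ Finset.range n, θ k ≤ χ k * α k + η k + (α k - α (k + 1)) := by
      intro k _
      have := hrec k
      nlinarith
    calc ∑ k ∈ Finset.range n, θ k
        ≤ ∑ k ∈ Finset.range n, (χ k * α k + η k + (α k - α (k + 1))) :=
          Finset.sum_le_sum key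
      _ = ∑ k ∈ Finset.range n, (χ k * α k) + ∑ k ∈ Finset.range n, η k
            + ∑ k ∈ Finset.range n, (α k - α (k + 1)) := by
          rw [← Finset.sum_add_distrib, ← Finset.sum_add_distrib]
      _ ≤ M * (∑' k, χ k) + (∑' k, η k) + α 0 := by
          have h1 : ∑ k ∈ Finset.range n, (χ k * α k) ≤ M * (∑' k, χ k) := by
            calc ∑ k ∈ Finset.range n, (χ k * α k)
                ≤ ∑ k ∈ Finset.range n, (χ k * M) :=
                  Finset.sum_le_sum (fun k _ =>
                    mul_le_mul_of_nonneg_left (hM' k) (hχ k))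
              _ = (∑ k ∈ Finset.range n, χ k) * M := by rw [← Finset.sum_mul]
              _ ≤ (∑' k, χ k) * M :=
                  mul_le_mul_of_nonneg_right (Summable.sum_le_tsum _ (fun k _ => hχ k) hχs) hM0
              _ = M * (∑' k, χ k) := mul_comm _ _
          have h3 : ∑ k ∈ Finset.range n, (α k - α (k + 1)) = α 0 - α n :=
            Finset.sum_range_sub' α n
          have := hSle n
          have := hα n
          simp only [hSdef] at *
          linarith
  exact ⟨hθsum, ⟨_, hl0, hαconv⟩⟩
end

section
/- Consider the stochastic iteration x_{n+1} = x_n − λ_n d_n in a separable real Hilbert space H, where x_0 ∈ L^2, and at each step d_n ∈ L^2(Ω,F,P;H), λ_n ∈ L^∞(Ω,F,P;(0,∞)), E[λ_n(2−λ_n)‖d_n‖² | X_n] ≥ 0 a.s. with X_n = σ(x_0,…,x_n), and for every z ∈ Z, E[λ_n⟨z + d_n − x_n, d_n⟩ | X_n] ≤ δ_n(·,z)/2 a.s. for nonnegative Carathéodory integrands δ_n. Then for every n ∈ ℕ and every z ∈ Z: E[‖x_{n+1} − z‖² | X_n] ≤ ‖x_n − z‖² − E[λ_n(2−λ_n)‖d_n‖²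 | X_n] + δ_n(·,z) almost surely. -/
/-!
Expanding the square, `‖x - λd - z‖² = ‖x - z‖² - λ(2-λ)‖d‖² + 2λ⟨z + d - x, d⟩` pointwise.
Conditioning on `X_n`, the first term is `X_n`-measurable and passes through the conditional
expectation, the second is kept, and the third is bounded by the hypothesis on `δ_n`.
-/

open Filter MeasureTheory

/-- `σ(x_0, …, x_n)`. -/
def sigmaUpTo {Ω H : Type*} [MeasurableSpace H] (x : ℕ → Ω → H) (n : ℕ) :
    MeasurableSpace Ω :=
  ⨆ i ∈ Set.Iic n, MeasurableSpace.comap (x i) inferInstance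

lemma measurable_sigmaUpTo {Ω H : Type*} [MeasurableSpace H] (x : ℕ → Ω → H) {i n : ℕ}
    (hin : i ≤ n) : Measurable[sigmaUpTo x n] (x i) :=
  measurable_iff_comap_le.mpr <|
    le_iSup₂ (f := fun j (_ : j ∈ Set.Iic n) => MeasurableSpace.comap (x j) inferInstance)
      i (Set.mem_Iic.2 hin)

lemma memLp_top_of_ae_nonneg_of_ae_le {Ω : Type*} {m0 : MeasurableSpace Ω} {μ : Measure Ω}
    {f : Ω → ℝ} (hf : AEStronglyMeasurable f μ) (h0 : ∀ᵐ ω ∂μ, 0 ≤ f ω) {c : ℝ}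
    (hc : ∀ᵐ ω ∂μ, f ω ≤ c) : MemLp f ⊤ μ :=
  memLp_top_of_bound hf c <| by
    filter_upwards [h0, hc] with ω h0 hc
    rwa [Real.norm_of_nonneg h0]

section InnerProductSpace

variable {Ω H : Type*} [NormedAddCommGroup H] [InnerProductSpace ℝ H]

lemma MeasureTheory.MemLp.integrable_inner {m0 : MeasurableSpace Ω} {μ : Measure Ω} {f g : Ω → H}
    (hf : MemLp f 2 μ) (hg : MemLp g 2 μ) : Integrable (fun ω => inner ℝ (f ω) (g ω)) μ :=
  (L2.integrable_inner (𝕜 := ℝ) hf.toLp hg.toLp).congr <| by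
    filter_upwards [hf.coeFn_toLp, hg.coeFn_toLp] with ω hfω hgω
    rw [hfω, hgω]

lemma norm_sub_smul_sub_sq (x d z : H) (l : ℝ) :
    ‖x - l • d - z‖ ^ 2
      = ‖x - z‖ ^ 2 - l * (2 - l) * ‖d‖ ^ 2 + 2 * (l * inner ℝ (z + d - x) d) := by
  have hinner : inner ℝ (z + d - x) d = ‖d‖ ^ 2 - inner ℝ (x - z) d := by
    rw [inner_sub_left, inner_add_left, real_inner_self_eq_norm_sq, inner_sub_left]
    ring
  rw [sub_right_comm, norm_sub_sq_real, real_inner_smul_right, norm_smul, Real.norm_eq_abs,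
    mul_pow, sq_abs, hinner]
  ring

lemma condExp_norm_sub_smul_sub_sq {m m0 : MeasurableSpace Ω} {μ : Measure Ω}
    [IsFiniteMeasure μ] (hm : m ≤ m0) {x d : Ω → H} {lam : Ω → ℝ}
    (hxm : StronglyMeasurable[m] x) (hx : MemLp x 2 μ) (hd : MemLp d 2 μ)
    (hlam : MemLp lam ⊤ μ) (z : H) :
    μ[fun ω => ‖x ω - lam ω • d ω - z‖ ^ 2 | m]
      =ᵐ[μ] fun ω => ‖x ω - z‖ ^ 2
        - μ[fun ω => lam ω * (2 - lam ω) * ‖d ω‖ ^ 2 | m] ω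
        + 2 * μ[fun ω => lam ω * inner ℝ (z + d ω - x ω) (d ω) | m] ω := by
  set dist2 : Ω → ℝ := fun ω => ‖x ω - z‖ ^ 2
  set descent : Ω → ℝ := fun ω => lam ω * (2 - lam ω) * ‖d ω‖ ^ 2
  set geom : Ω → ℝ := fun ω => lam ω * inner ℝ (z + d ω - x ω) (d ω)
  have hdist2 : Integrable dist2 μ := (hx.sub (memLp_const z)).norm.integrable_sq
  have hdist2m : StronglyMeasurable[m] dist2 :=
    (hxm.sub stronglyMeasurable_const).norm.pow 2
  have hdescent : Integrable descent μ :=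
    hd.norm.integrable_sq.mul_of_top_right (((memLp_top_const 2).sub hlam).mul hlam)
  have hgeom : Integrable geom μ :=
    (((memLp_const z).add hd).sub hx).integrable_inner hd |>.mul_of_top_right hlam
  have hsplit : (fun ω => ‖x ω - lam ω • d ω - z‖ ^ 2) = dist2 - descent + (2 : ℝ) • geom :=
    funext fun ω => norm_sub_smul_sub_sq (x ω) (d ω) z (lam ω)
  rw [hsplit]
  filter_upwards [condExp_add (hdist2.sub hdescent) (hgeom.smul (2 : ℝ)) m,
    condExp_sub hdist2 hdescent m, condExp_smul (2 : ℝ) geom m] with ω h1 h2 h3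
  simp only [Pi.add_apply, Pi.sub_apply, Pi.smul_apply, smul_eq_mul] at h1 h2 h3 ⊢
  rw [h1, h2, h3, condExp_of_stronglyMeasurable hm hdist2m hdist2]

end InnerProductSpace

theorem stmt7_general {Ω H : Type*} {m0 : MeasurableSpace Ω} (μ : Measure Ω)
    [IsProbabilityMeasure μ]
    [NormedAddCommGroup H] [InnerProductSpace ℝ H] [SecondCountableTopology H]
    [MeasurableSpace H] [BorelSpace H]
    (Z : Set H)
    (x d : ℕ → Ω → H) (lam : ℕ → Ω → ℝ) (δ : ℕ → Ω → H → ℝ)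
    (hsub : ∀ n, sigmaUpTo x n ≤ m0)
    (hx0 : MemLp (x 0) 2 μ)
    (hd : ∀ n, MemLp (d n) 2 μ)
    (hlam_meas : ∀ n, Measurable (lam n))
    (hlam_pos : ∀ n, ∀ᵐ ω ∂μ, 0 < lam n ω)
    (hlam_bdd : ∀ n, ∃ c : ℝ, ∀ᵐ ω ∂μ, lam n ω ≤ c)
    (hgeom : ∀ n, ∀ z ∈ Z, ∀ᵐ ω ∂μ,
      (μ[fun ω' => lam n ω' * (inner ℝ (z + d n ω' - x n ω') (d n ω') : ℝ) |
          sigmaUpTo x n]) ω ≤ δ n ω z / 2)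
    (hupdate : ∀ n ω, x (n + 1) ω = x n ω - lam n ω • d n ω) :
    ∀ n, ∀ z ∈ Z, ∀ᵐ ω ∂μ,
      (μ[fun ω' => ‖x (n + 1) ω' - z‖ ^ 2 | sigmaUpTo x n]) ω
        ≤ ‖x n ω - z‖ ^ 2
          - (μ[fun ω' => lam n ω' * (2 - lam n ω') * ‖d n ω'‖ ^ 2 | sigmaUpTo x n]) ω
          + δ n ω z := by
  have hlam : ∀ n, MemLp (lam n) ⊤ μ := fun n =>
    have ⟨_, hc⟩ := hlam_bdd n
    memLp_top_of_ae_nonneg_of_ae_le (hlam_meas n).aestronglyMeasurable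
      ((hlam_pos n).mono fun _ h => h.le) hc
  have hx : ∀ n, MemLp (x n) 2 μ := by
    intro n
    induction n with
    | zero => exact hx0
    | succ n ih =>
      rw [show x (n + 1) = x n - lam n • d n from funext (hupdate n)]
      exact ih.sub ((hd n).smul (hlam n))
  intro n z hz
  have hxm : StronglyMeasurable[sigmaUpTo x n] (x n) :=
    (measurable_sigmaUpTo x le_rfl).stronglyMeasurable
  simp_rw [hupdate n]
  filter_upwards [condExp_norm_sub_smul_sub_sq (hsub n) hxm (hx n) (hd n) (hlam n) z,
    hgeom n z hz] with ω hsplit hδ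
  rw [hsplit]
  linarith

/-- Fundamental inequality for the stochastic iteration `x_{n+1} = x_n − λ_n d_n`
(Algorithm 3): for every `n` and every `z ∈ Z`,
`E[‖x_{n+1}−z‖² | X_n] ≤ ‖x_n−z‖² − E[λ_n(2−λ_n)‖d_n‖² | X_n] + δ_n(·,z)` a.s. -/
theorem stmt7 {Ω H : Type*} {m0 : MeasurableSpace Ω} (μ : Measure Ω)
    [IsProbabilityMeasure μ] (hcomp : μ.IsComplete)
    [NormedAddCommGroup H] [InnerProductSpace ℝ H] [SecondCountableTopology H]
    [CompleteSpace H] [MeasurableSpace H] [BorelSpace H]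
    (Z : Set H) (hZne : Z.Nonempty) (hZcl : IsClosed Z)
    (x d : ℕ → Ω → H) (lam : ℕ → Ω → ℝ) (δ : ℕ → Ω → H → ℝ)
    (hsub : ∀ n, sigmaUpTo x n ≤ m0)
    (hx0 : MemLp (x 0) 2 μ)
    (hd : ∀ n, MemLp (d n) 2 μ)
    (hlam_meas : ∀ n, Measurable (lam n))
    (hlam_pos : ∀ n, ∀ᵐ ω ∂μ, 0 < lam n ω)
    (hlam_bdd : ∀ n, ∃ c : ℝ, ∀ᵐ ω ∂μ, lam n ω ≤ c)
    (hδ_nonneg : ∀ n, ∀ z ∈ Z, ∀ᵐ ω ∂μ, 0 ≤ δ n ω z)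
    (hδ_int : ∀ n, ∀ z ∈ Z, Integrable (fun ω => δ n ω z) μ)
    (hpos : ∀ n, ∀ᵐ ω ∂μ,
      0 ≤ (μ[fun ω' => lam n ω' * (2 - lam n ω') * ‖d n ω'‖ ^ 2 | sigmaUpTo x n]) ω)
    (hgeom : ∀ n, ∀ z ∈ Z, ∀ᵐ ω ∂μ,
      (μ[fun ω' => lam n ω' * (inner ℝ (z + d n ω' - x n ω') (d n ω') : ℝ) |
          sigmaUpTo x n]) ω ≤ δ n ω z / 2)
    (hupdate : ∀ n ω, x (n + 1) ω = x n ω - lam n ω • d n ω) :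
    ∀ n, ∀ z ∈ Z, ∀ᵐ ω ∂μ,
      (μ[fun ω' => ‖x (n + 1) ω' - z‖ ^ 2 | sigmaUpTo x n]) ω
        ≤ ‖x n ω - z‖ ^ 2
          - (μ[fun ω' => lam n ω' * (2 - lam n ω') * ‖d n ω'‖ ^ 2 | sigmaUpTo x n]) ω
          + δ n ω z :=
  stmt7_general μ Z x d lam δ hsub hx0 hd hlam_meas hlam_pos hlam_bdd hgeom hupdate
end
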